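/- arXiv:1401.7860 — 2 statements merged into one kernel-verified Lean document; each statement's English description precedes it below -/
import Mathlib

section
/- Let L and L′ be two generic length vectors of length n, and let I ⊆ [n] with |I| = k, 1 ≤ k ≤ n−1. Assume: (a) every subset A ⊆ [n] with A ∉ {I, [n]∖I} is short for L if and only if it is short for L′; (b) I is short for L and long for L′ (hence [n]∖I is long for L and short for L′); (c) every nonempty proper subset of I and every nonempty proper subset of [n]∖I is short for both L and L′. Then (number of vertices of Γ(L′)) − (number of vertices of Γ(L)) = 2^k − 2^{n−k}. -/
open Finset

/-- `I ⊆ [n]` is *short*: the sum of its lengths is less than that of its complement. -/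
def ShortSet {n : ℕ} (L : Fin n → ℝ) (I : Finset (Fin n)) : Prop :=
  ∑ i ∈ I, L i < ∑ i ∈ Iᶜ, L i

/-- `I ⊆ [n]` is *long*: the sum of its lengths is greater than that of its complement. -/
def LongSet {n : ℕ} (L : Fin n → ℝ) (I : Finset (Fin n)) : Prop :=
  ∑ i ∈ Iᶜ, L i < ∑ i ∈ I, L i

/-- The length vector `L` is *generic*. -/
def GenericVec {n : ℕ} (L : Fin n → ℝ) : Prop :=
  ∀ I : Finset (Fin n), ∑ i ∈ I, L i ≠ ∑ i ∈ Iᶜ, L i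

/-- `L` satisfies the triangle inequality: every singleton is short. -/
def TriangleIneq {n : ℕ} (L : Fin n → ℝ) : Prop :=
  ∀ i : Fin n, ShortSet L {i}

/-- Ordered triples of subsets of `[n]`. -/
abbrev LTriple (n : ℕ) := Finset (Fin n) × Finset (Fin n) × Finset (Fin n)

/-- An ordered triple `(I, J, K)` representing a vertex of `Γ(L)`: three pairwise
disjoint nonempty short sets whose union is `[n]`. -/
def IsVertex {n : ℕ} (L : Fin n → ℝ) (V : LTriple n) : Prop :=
  V.1.Nonempty ∧ V.2.1.Nonempty ∧ V.2.2.Nonempty ∧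
  ShortSet L V.1 ∧ ShortSet L V.2.1 ∧ ShortSet L V.2.2 ∧
  Disjoint V.1 V.2.1 ∧ Disjoint V.1 V.2.2 ∧ Disjoint V.2.1 V.2.2 ∧
  V.1 ∪ V.2.1 ∪ V.2.2 = Finset.univ

/-- Cyclic rotation of an ordered triple. -/
def rotT {n : ℕ} (V : LTriple n) : LTriple n := (V.2.1, V.2.2, V.1)

/-- Two ordered triples represent the same cyclically ordered partition
(`(I,J,K)`, `(J,K,I)` and `(K,I,J)` are identified). -/
def CyclEq {n : ℕ} (V W : LTriple n) : Prop :=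
  W = V ∨ W = rotT V ∨ W = rotT (rotT V)

/-- The mirror image of the vertex `(I, J, K)` is the vertex `(J, I, K)`. -/
def mirrorT {n : ℕ} (V : LTriple n) : LTriple n := (V.2.1, V.1, V.2.2)

/-- The elementary move on representatives: shift a nonempty proper subset
`S ⊊ I` to the second part, provided `J ∪ S` stays short. -/
def MoveStep {n : ℕ} (L : Fin n → ℝ) (V W : LTriple n) : Prop :=
  ∃ S : Finset (Fin n), S.Nonempty ∧ S ⊂ V.1 ∧ ShortSet L (V.2.1 ∪ S) ∧
    W = (V.1 \ S, V.2.1 ∪ S, V.2.2)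

/-- Adjacency in `Γ(L)`: one of the two vertices has a representative from which an
elementary move leads to a representative of the other. -/
def GammaAdj {n : ℕ} (L : Fin n → ℝ) (V W : LTriple n) : Prop :=
  (∃ V' W' : LTriple n, CyclEq V V' ∧ MoveStep L V' W' ∧ CyclEq W W') ∨
  (∃ W' V' : LTriple n, CyclEq W W' ∧ MoveStep L W' V' ∧ CyclEq V V')

/-- There is a path of length `m` (i.e. with `m` consecutive edges) in `Γ(L)`
from the vertex `V` to the vertex `W`. -/
def GammaPath {n : ℕ} (L : Fin n → ℝ) (m : ℕ) (V W : LTriple n) : Prop :=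
  ∃ f : ℕ → LTriple n, CyclEq V (f 0) ∧ CyclEq W (f m) ∧
    (∀ i ≤ m, IsVertex L (f i)) ∧ ∀ i < m, GammaAdj L (f i) (f (i + 1))

open scoped Classical in
/-- The finset of ordered triples representing vertices of `Γ(L)`; the number of
vertices of `Γ(L)` is one third of its cardinality. -/
noncomputable def vertexTriples {n : ℕ} (L : Fin n → ℝ) : Finset (LTriple n) :=
  Finset.univ.filter (fun V => IsVertex L V)

/-! Only `I` and `Iᶜ` change their shortness when passing from `L` to `L'`. Hence an ordered
triple of short sets gained in the passage must have `Iᶜ` as a block; its two other blocks then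
split `I` into nonempty proper subsets, which are short for both vectors, and conversely every
such triple is gained. For each of the three positions of `Iᶜ` there are `2^k - 2` such splits.
Symmetrically, the triples lost are those having `I` as a block, `3 (2^{n-k} - 2)` of them. -/

lemma card_sub_card_eq_card_sdiff_sub_card_sdiff {α : Type*} [DecidableEq α] (s t : Finset α) :
    (#s : ℤ) - #t = #(s \ t) - #(t \ s) := by
  have hs := card_sdiff_add_card_inter s t
  have ht := card_sdiff_add_card_inter t s
  rw [inter_comm] at ht
  omega

lemma card_ssubsets_erase_empty {α : Type*} [DecidableEq α] {s : Finset α} (hs : s.Nonempty) :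
    #(s.ssubsets.erase ∅) = 2 ^ #s - 2 := by
  rw [card_erase_of_mem (empty_mem_ssubsets hs), ssubsets,
    card_erase_of_mem (mem_powerset_self s), card_powerset, Nat.sub_sub]

lemma ssubset_compl_of_disjoint {α : Type*} [Fintype α] [DecidableEq α] {A B C : Finset α}
    (hAB : Disjoint A B) (hAC : Disjoint A C) (hBC : Disjoint B C) (hC : C.Nonempty) :
    B ⊂ Aᶜ := by
  obtain ⟨c, hc⟩ := hC
  rw [ssubset_iff_of_subset (subset_compl_iff_disjoint_left.mpr hAB)]
  exact ⟨c, mem_compl.mpr (disjoint_right.mp hAC hc), disjoint_right.mp hBC hc⟩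

lemma eq_compl_sdiff_of_disjoint {α : Type*} [Fintype α] [DecidableEq α] {A B C : Finset α}
    (hAC : Disjoint A C) (hBC : Disjoint B C) (hu : A ∪ B ∪ C = univ) : C = Aᶜ \ B := by
  rw [sdiff_eq_inter_compl, ← compl_union, eq_compl_iff_isCompl]
  exact ⟨(disjoint_union_left.mpr ⟨hAC, hBC⟩).symm,
    codisjoint_iff.mpr (by rw [sup_comm]; exact hu)⟩

lemma shortSet_compl_iff {n : ℕ} {L : Fin n → ℝ} {I : Finset (Fin n)} :
    ShortSet L Iᶜ ↔ LongSet L I := by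
  rw [ShortSet, LongSet, compl_compl]

lemma ShortSet.not_longSet {n : ℕ} {L : Fin n → ℝ} {I : Finset (Fin n)} (h : ShortSet L I) :
    ¬ LongSet L I :=
  lt_asymm h

lemma LongSet.not_shortSet {n : ℕ} {L : Fin n → ℝ} {I : Finset (Fin n)} (h : LongSet L I) :
    ¬ ShortSet L I :=
  lt_asymm h

lemma mem_vertexTriples {n : ℕ} {L : Fin n → ℝ} {V : LTriple n} :
    V ∈ vertexTriples L ↔ IsVertex L V := by
  simp [vertexTriples]

open scoped Classical

section Tripartition

variable {n : ℕ}

def IsTripartition (V : LTriple n) : Prop :=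
  V.1.Nonempty ∧ V.2.1.Nonempty ∧ V.2.2.Nonempty ∧
  Disjoint V.1 V.2.1 ∧ Disjoint V.1 V.2.2 ∧ Disjoint V.2.1 V.2.2 ∧
  V.1 ∪ V.2.1 ∪ V.2.2 = univ

def HasBlock (J : Finset (Fin n)) (V : LTriple n) : Prop :=
  V.1 = J ∨ V.2.1 = J ∨ V.2.2 = J

lemma isVertex_iff {L : Fin n → ℝ} {V : LTriple n} :
    IsVertex L V ↔
      IsTripartition V ∧ ShortSet L V.1 ∧ ShortSet L V.2.1 ∧ ShortSet L V.2.2 := by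
  unfold IsVertex IsTripartition
  tauto

lemma isTripartition_rotT_iff {V : LTriple n} : IsTripartition (rotT V) ↔ IsTripartition V := by
  obtain ⟨A, B, C⟩ := V
  simp only [IsTripartition, rotT, union_comm (B ∪ C) A, ← union_assoc,
    disjoint_comm (a := B) (b := A), disjoint_comm (a := C) (b := A)]
  tauto

lemma rotT_rotT_rotT (V : LTriple n) : rotT (rotT (rotT V)) = V :=
  rfl

lemma card_filter_eq_of_rotT {p q : LTriple n → Prop} [DecidablePred p] [DecidablePred q]
    (h : ∀ V, q V ↔ p (rotT V)) : #(univ.filter q) = #(univ.filter p) :=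
  card_nbij' rotT (rotT ∘ rotT) (fun V hV => by simpa [h] using hV)
    (fun V hV => by simpa [h, rotT_rotT_rotT] using hV) (fun _ _ => rfl) (fun _ _ => rfl)

lemma card_tripartitions_fst_eq {J : Finset (Fin n)} (hJ : J.Nonempty) (hJc : Jᶜ.Nonempty) :
    #(univ.filter fun V => IsTripartition V ∧ V.1 = J) = 2 ^ #Jᶜ - 2 := by
  rw [← card_ssubsets_erase_empty hJc]
  refine card_nbij' (fun V => V.2.1) (fun B => (J, B, Jᶜ \ B)) ?_ ?_ ?_ ?_
  · rintro ⟨A, B, C⟩ hV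
    obtain ⟨⟨hA, hB, hC, hAB, hAC, hBC, -⟩, rfl⟩ := by simpa using hV
    have hBA := ssubset_compl_of_disjoint hAB hAC hBC hC
    simpa [hBA] using hB.ne_empty
  · intro B hB
    obtain ⟨hBJ, hB⟩ : B ⊂ Jᶜ ∧ B ≠ ∅ := by simpa [and_comm] using hB
    refine mem_filter.mpr ⟨mem_univ _, ⟨hJ, nonempty_iff_ne_empty.mpr hB,
      sdiff_nonempty.mpr (not_subset_of_ssubset hBJ),
      subset_compl_iff_disjoint_left.mp hBJ.subset, disjoint_compl_right.mono_right sdiff_subset,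
      disjoint_sdiff, ?_⟩, rfl⟩
    rw [union_assoc, union_sdiff_of_subset hBJ.subset, union_compl]
  · rintro ⟨A, B, C⟩ hV
    obtain ⟨⟨-, -, -, -, hAC, hBC, hu⟩, rfl⟩ := by simpa using hV
    exact congrArg (fun X => (A, B, X)) (eq_compl_sdiff_of_disjoint hAC hBC hu).symm
  · intro B _
    rfl

lemma card_tripartitions_hasBlock {J : Finset (Fin n)} (hJ : J.Nonempty) (hJc : Jᶜ.Nonempty) :
    #(univ.filter fun V => IsTripartition V ∧ HasBlock J V) = 3 * (2 ^ #Jᶜ - 2) := by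
  have h₁ := card_tripartitions_fst_eq hJ hJc
  have h₂ : #(univ.filter fun V => IsTripartition V ∧ V.2.1 = J) = 2 ^ #Jᶜ - 2 := by
    rw [← h₁]
    exact card_filter_eq_of_rotT fun V => by rw [isTripartition_rotT_iff]; rfl
  have h₃ : #(univ.filter fun V => IsTripartition V ∧ V.2.2 = J) = 2 ^ #Jᶜ - 2 := by
    rw [← h₂]
    exact card_filter_eq_of_rotT fun V => by rw [isTripartition_rotT_iff]; rfl
  have hdisj {f g : LTriple n → Finset (Fin n)}
      (hfg : ∀ V, IsTripartition V → Disjoint (f V) (g V)) :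
      Disjoint (univ.filter fun V => IsTripartition V ∧ f V = J)
        (univ.filter fun V => IsTripartition V ∧ g V = J) :=
    disjoint_filter.mpr fun V _ h h' => by
      have hJJ := hfg V h.1
      rw [h.2, h'.2] at hJJ
      exact hJ.ne_empty (disjoint_self.mp hJJ)
  simp only [HasBlock, and_or_left, filter_or]
  rw [card_union_of_disjoint (disjoint_union_right.mpr
      ⟨hdisj fun _ h => h.2.2.2.1, hdisj fun _ h => h.2.2.2.2.1⟩),
    card_union_of_disjoint (hdisj fun _ h => h.2.2.2.2.2.1), h₁, h₂, h₃]
  ring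

end Tripartition

section Wall

variable {n : ℕ} {M M' : Fin n → ℝ} {J : Finset (Fin n)} {V : LTriple n}

lemma IsVertex.shortSet_of_hasBlock (h : IsVertex M V) (hJV : HasBlock J V) : ShortSet M J := by
  obtain ⟨-, h₁, h₂, h₃⟩ := isVertex_iff.mp h
  rcases hJV with rfl | rfl | rfl <;> assumption

lemma hasBlock_of_isVertex_of_not_isVertex
    (hMM' : ∀ A, A ≠ J → A ≠ Jᶜ → ShortSet M' A → ShortSet M A)
    (hJc : ¬ ShortSet M' Jᶜ)
    (h' : IsVertex M' V) (h : ¬ IsVertex M V) : HasBlock J V := by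
  have key : ∀ X, X ≠ J → ShortSet M' X → ShortSet M X := fun X hXJ hX' =>
    hMM' X hXJ (by rintro rfl; exact hJc hX') hX'
  obtain ⟨hV, h₁, h₂, h₃⟩ := isVertex_iff.mp h'
  by_contra hJV
  obtain ⟨n₁, n₂, n₃⟩ : V.1 ≠ J ∧ V.2.1 ≠ J ∧ V.2.2 ≠ J := by
    simpa [HasBlock] using hJV
  exact h (isVertex_iff.mpr ⟨hV, key _ n₁ h₁, key _ n₂ h₂, key _ n₃ h₃⟩)

lemma isVertex_of_hasBlock (hJ : ShortSet M' J)
    (hsub : ∀ A, A.Nonempty → A ⊂ Jᶜ → ShortSet M' A)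
    (hV : IsTripartition V) (hJV : HasBlock J V) : IsVertex M' V := by
  refine isVertex_iff.mpr ⟨hV, ?_⟩
  obtain ⟨A, B, C⟩ := V
  obtain ⟨hA, hB, hC, hAB, hAC, hBC, -⟩ := hV
  rcases hJV with rfl | rfl | rfl
  · exact ⟨hJ, hsub B hB (ssubset_compl_of_disjoint hAB hAC hBC hC),
      hsub C hC (ssubset_compl_of_disjoint hAC hAB hBC.symm hB)⟩
  · exact ⟨hsub A hA (ssubset_compl_of_disjoint hAB.symm hBC hAC hC), hJ,
      hsub C hC (ssubset_compl_of_disjoint hBC hAB.symm hAC.symm hA)⟩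
  · exact ⟨hsub A hA (ssubset_compl_of_disjoint hAC.symm hBC.symm hAB hB),
      hsub B hB (ssubset_compl_of_disjoint hBC.symm hAC.symm hAB.symm hA), hJ⟩

lemma sdiff_vertexTriples_eq
    (hMM' : ∀ A, A ≠ J → A ≠ Jᶜ → ShortSet M' A → ShortSet M A)
    (hJ : ShortSet M' J) (hJM : ¬ ShortSet M J) (hJc : ¬ ShortSet M' Jᶜ)
    (hsub : ∀ A, A.Nonempty → A ⊂ Jᶜ → ShortSet M' A) :
    vertexTriples M' \ vertexTriples M =
      univ.filter fun V => IsTripartition V ∧ HasBlock J V := by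
  ext V
  simp only [mem_sdiff, mem_vertexTriples, mem_filter, mem_univ, true_and]
  constructor
  · rintro ⟨h', h⟩
    exact ⟨(isVertex_iff.mp h').1, hasBlock_of_isVertex_of_not_isVertex hMM' hJc h' h⟩
  · rintro ⟨hV, hJV⟩
    exact ⟨isVertex_of_hasBlock hJ hsub hV hJV, fun h => hJM (h.shortSet_of_hasBlock hJV)⟩

end Wall

theorem wall_crossing_vertex_count_general (n : ℕ) (L L' : Fin n → ℝ)
    (I : Finset (Fin n)) (hk1 : 1 ≤ I.card) (hk2 : I.card ≤ n - 1)
    (ha : ∀ A : Finset (Fin n), A ≠ I → A ≠ Iᶜ → (ShortSet L A ↔ ShortSet L' A))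
    (hb : ShortSet L I) (hb' : LongSet L' I)
    (hc : ∀ A : Finset (Fin n), A.Nonempty → A ⊂ I → ShortSet L A ∧ ShortSet L' A)
    (hc' : ∀ A : Finset (Fin n), A.Nonempty → A ⊂ Iᶜ → ShortSet L A ∧ ShortSet L' A) :
    ((vertexTriples L').card : ℤ) - ((vertexTriples L).card : ℤ) =
      3 * (2 ^ I.card - 2 ^ (n - I.card)) := by
  have hI : I.Nonempty := card_pos.mp hk1
  have hIc : #Iᶜ = n - #I := by rw [card_compl, Fintype.card_fin]
  have hI' : Iᶜ.Nonempty := card_pos.mp (by omega)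
  have gained := sdiff_vertexTriples_eq (M := L) (M' := L') (J := Iᶜ)
    (fun A h₁ h₂ => (ha A (by rwa [compl_compl] at h₂) h₁).mpr) (shortSet_compl_iff.mpr hb')
    (shortSet_compl_iff.not.mpr hb.not_longSet) (by rw [compl_compl]; exact hb'.not_shortSet)
    (fun A hA hAI => (hc A hA (by rwa [compl_compl] at hAI)).2)
  have lost := sdiff_vertexTriples_eq (M := L') (M' := L) (J := I)
    (fun A h₁ h₂ => (ha A h₁ h₂).mp) hb hb'.not_shortSet
    (shortSet_compl_iff.not.mpr hb.not_longSet)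
    (fun A hA hAI => (hc' A hA hAI).1)
  rw [card_sub_card_eq_card_sdiff_sub_card_sdiff, gained, lost,
    card_tripartitions_hasBlock hI' (by rwa [compl_compl]), card_tripartitions_hasBlock hI hI',
    compl_compl, hIc, Nat.cast_mul, Nat.cast_mul, Nat.cast_sub (Nat.le_self_pow (by omega) 2),
    Nat.cast_sub (Nat.le_self_pow (by omega) 2)]
  push_cast
  ring

/-- (Crossing a wall.) Let `L`, `L'` be generic length vectors,
`I ⊆ [n]` with `1 ≤ |I| ≤ n−1`. If (a) every subset other than `I` and its complement
is short for `L` iff it is short for `L'`; (b) `I` is short for `L` and long for `L'`;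
(c) every nonempty proper subset of `I` and of `[n]∖I` is short for both; then the
number of vertices of `Γ(L')` minus that of `Γ(L)` equals `2^{|I|} − 2^{n−|I|}`
(equivalently, three times that for the ordered triples). -/
theorem wall_crossing_vertex_count (n : ℕ) (hn : 3 ≤ n) (L L' : Fin n → ℝ)
    (hpos : ∀ i, 0 < L i) (hpos' : ∀ i, 0 < L' i)
    (hgen : GenericVec L) (hgen' : GenericVec L')
    (I : Finset (Fin n)) (hk1 : 1 ≤ I.card) (hk2 : I.card ≤ n - 1)
    (ha : ∀ A : Finset (Fin n), A ≠ I → A ≠ Iᶜ → (ShortSet L A ↔ ShortSet L' A))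
    (hb : ShortSet L I) (hb' : LongSet L' I)
    (hc : ∀ A : Finset (Fin n), A.Nonempty → A ⊂ I → ShortSet L A ∧ ShortSet L' A)
    (hc' : ∀ A : Finset (Fin n), A.Nonempty → A ⊂ Iᶜ → ShortSet L A ∧ ShortSet L' A) :
    ((vertexTriples L').card : ℤ) - ((vertexTriples L).card : ℤ) =
      3 * (2 ^ I.card - 2 ^ (n - I.card)) :=
  wall_crossing_vertex_count_general n L L' I hk1 hk2 ha hb hb' hc hc'
end

section
/- Suppose L is generic, satisfies the triangle inequality, and l_1 ≥ l_i for all i ∈ [n]. Then for every vertex V of Γ(L) there exists a vertex of the form (I, {1}, J) (i.e., a vertex one of whose parts is the singleton {1}) at distance at most 2 from V in Γ(L). -/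
open Finset

/-! Rotate so that `1 ∈ I` and put `A = I ∖ {1}`. If `A = ∅` there is nothing to do, and if
`J ∪ A` or `K ∪ A` is short, one move of `A` reaches `({1}, _, _)`. Otherwise, by genericity,
`{1} ∪ J` is short; as `l₁` is longest, so is `J ∪ {j}` for every `j ∈ A`. Move a maximal
`S ⊆ A` with `J ∪ S` short into `J`: maximality and `l₁ ≥ l_j` make `{1} ∪ J ∪ S` long, so
its complement `K ∪ (A ∖ S)` is short and the rest of `A` can be moved into `K`. -/

section

variable {n : ℕ} {L : Fin n → ℝ}

lemma shortSet_iff {I : Finset (Fin n)} : ShortSet L I ↔ 2 * ∑ i ∈ I, L i < ∑ i, L i := by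
  have := sum_add_sum_compl I L
  unfold ShortSet
  constructor <;> intro <;> linarith

lemma ShortSet.mono (hpos : ∀ i, 0 < L i) {I I' : Finset (Fin n)} (h : I ⊆ I')
    (h' : ShortSet L I') : ShortSet L I := by
  rw [shortSet_iff] at h' ⊢
  linarith [sum_le_sum_of_subset_of_nonneg h fun i _ _ => (hpos i).le]

lemma GenericVec.shortSet_compl (hgen : GenericVec L) {I : Finset (Fin n)}
    (h : ¬ ShortSet L I) : ShortSet L Iᶜ := by
  unfold ShortSet at h ⊢
  rw [compl_compl]
  exact (not_lt.1 h).lt_of_ne fun e => hgen I e.symm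

lemma ShortSet.exchange {a j : Fin n} {X : Finset (Fin n)} (hja : L j ≤ L a) (ha : a ∉ X)
    (hj : j ∉ X) (h : ShortSet L (insert a X)) : ShortSet L (insert j X) := by
  rw [shortSet_iff, sum_insert hj] at *
  rw [sum_insert ha] at h
  linarith

lemma cyclEq_trans {U V W : LTriple n} (h₁ : CyclEq U V) (h₂ : CyclEq V W) : CyclEq U W := by
  rcases h₁ with rfl | rfl | rfl <;> rcases h₂ with rfl | rfl | rfl <;>
    first
      | exact Or.inl rfl
      | exact Or.inr (Or.inl rfl)
      | exact Or.inr (Or.inr rfl)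

section Vertex

variable {I J K S : Finset (Fin n)}

lemma IsVertex.rotT {V : LTriple n} (h : IsVertex L V) : IsVertex L (rotT V) := by
  obtain ⟨h1, h2, h3, h4, h5, h6, h7, h8, h9, h10⟩ := h
  refine ⟨h2, h3, h1, h5, h6, h4, h9, h7.symm, h8.symm, ?_⟩
  simp only [_root_.rotT, ← h10]
  ac_rfl

lemma IsVertex.mirrorT {V : LTriple n} (h : IsVertex L V) : IsVertex L (mirrorT V) := by
  obtain ⟨h1, h2, h3, h4, h5, h6, h7, h8, h9, h10⟩ := h
  refine ⟨h2, h1, h3, h5, h4, h6, h7.symm, h9, h8, ?_⟩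
  simp only [_root_.mirrorT, ← h10]
  ac_rfl

lemma IsVertex.exists_cyclEq_mem_fst {V : LTriple n} (hV : IsVertex L V) (a : Fin n) :
    ∃ V', CyclEq V V' ∧ IsVertex L V' ∧ a ∈ V'.1 := by
  have hu : V.1 ∪ V.2.1 ∪ V.2.2 = univ := hV.2.2.2.2.2.2.2.2.2
  have ha : a ∈ V.1 ∪ V.2.1 ∪ V.2.2 := hu ▸ mem_univ a
  rcases mem_union.1 ha with ha | ha
  · rcases mem_union.1 ha with ha | ha
    · exact ⟨V, Or.inl rfl, hV, ha⟩
    · exact ⟨_root_.rotT V, Or.inr (Or.inl rfl), hV.rotT, ha⟩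
  · exact ⟨_root_.rotT (_root_.rotT V), Or.inr (Or.inr rfl), hV.rotT.rotT, ha⟩

lemma IsVertex.move_to_snd (hpos : ∀ i, 0 < L i) (hV : IsVertex L (I, J, K)) (hSI : S ⊂ I)
    (hJS : ShortSet L (J ∪ S)) : IsVertex L (I \ S, J ∪ S, K) := by
  obtain ⟨-, hJ, hK, hI, -, hKs, hIJ, hIK, hJK, hu⟩ := hV
  refine ⟨sdiff_nonempty.2 (not_subset_of_ssubset hSI), hJ.mono subset_union_left, hK,
    hI.mono hpos sdiff_subset, hJS, hKs, ?_, hIK.mono_left sdiff_subset,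
    disjoint_union_left.2 ⟨hJK, hIK.mono_left hSI.subset⟩, ?_⟩
  · exact disjoint_union_right.2 ⟨hIJ.mono_left sdiff_subset, sdiff_disjoint⟩
  · rw [← hu]
    have := hSI.subset
    grind

lemma IsVertex.move_to_thd (hpos : ∀ i, 0 < L i) (hV : IsVertex L (I, J, K)) (hSI : S ⊂ I)
    (hKS : ShortSet L (K ∪ S)) : IsVertex L (I \ S, J, K ∪ S) :=
  ((hV.rotT.rotT.mirrorT.move_to_snd hpos hSI hKS).rotT.rotT.mirrorT :)

lemma IsVertex.compl_union_erase {a : Fin n} (hV : IsVertex L (I, J, K)) (ha : a ∈ I) :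
    (K ∪ I.erase a)ᶜ = insert a J := by
  obtain ⟨-, -, -, -, -, -, hIJ, hIK, hJK, hu⟩ := hV
  ext x
  have hx : x ∈ I ∪ J ∪ K := hu ▸ mem_univ x
  rw [disjoint_left] at hIJ hIK hJK
  grind [mem_compl]

lemma gammaAdj_move_to_snd (hS : S.Nonempty) (hSI : S ⊂ I) (hJS : ShortSet L (J ∪ S)) :
    GammaAdj L (I, J, K) (I \ S, J ∪ S, K) :=
  Or.inl ⟨_, _, Or.inl rfl, ⟨S, hS, hSI, hJS, rfl⟩, Or.inl rfl⟩

/-- Moving `S` into the third part is the reverse of the elementary move of `S` from `K ∪ S`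
into `I \ S` in the representative `(K ∪ S, I \ S, J)`. -/
lemma gammaAdj_move_to_thd (hV : IsVertex L (I, J, K)) (hS : S.Nonempty) (hSI : S ⊆ I) :
    GammaAdj L (I, J, K) (I \ S, J, K ∪ S) := by
  obtain ⟨-, -, ⟨k, hk⟩, hI, -, -, -, hIK, -, -⟩ := hV
  have hSK : Disjoint K S := (hIK.mono_left hSI).symm
  refine Or.inr ⟨(K ∪ S, I \ S, J), (K, I, J), Or.inr (Or.inr rfl),
    ⟨S, hS, (ssubset_iff_of_subset subset_union_right).2 ⟨k, mem_union_left _ hk, ?_⟩, ?_, ?_⟩,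
    Or.inr (Or.inr rfl)⟩
  · exact disjoint_left.1 hSK hk
  · rwa [sdiff_union_of_subset hSI]
  · rw [union_sdiff_cancel_right hSK, sdiff_union_of_subset hSI]

end Vertex

section Path

variable {m : ℕ} {U V W : LTriple n}

lemma GammaPath.cyclEq_left (hp : GammaPath L m V W) (h : CyclEq U V) : GammaPath L m U W :=
  let ⟨f, h0, hm, hv, he⟩ := hp
  ⟨f, cyclEq_trans h h0, hm, hv, he⟩

lemma GammaPath.cyclEq_right (hp : GammaPath L m U V) (h : CyclEq W V) : GammaPath L m U W :=
  let ⟨f, h0, hm, hv, he⟩ := hp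
  ⟨f, h0, cyclEq_trans h hm, hv, he⟩

lemma GammaPath.zero (hV : IsVertex L V) : GammaPath L 0 V V :=
  ⟨fun _ => V, Or.inl rfl, Or.inl rfl, fun _ _ => hV, fun _ h => absurd h (Nat.not_lt_zero _)⟩

lemma GammaPath.one (hU : IsVertex L U) (hV : IsVertex L V) (h : GammaAdj L U V) :
    GammaPath L 1 U V := by
  refine ⟨fun i => if i = 0 then U else V, Or.inl rfl, Or.inl rfl, ?_, ?_⟩
  · intro i hi
    interval_cases i <;> simpa
  · intro i hi
    interval_cases i
    simpa using h

lemma GammaPath.two (hU : IsVertex L U) (hV : IsVertex L V) (hW : IsVertex L W)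
    (h₁ : GammaAdj L U V) (h₂ : GammaAdj L V W) : GammaPath L 2 U W := by
  refine ⟨fun i => if i = 0 then U else if i = 1 then V else W, Or.inl rfl, Or.inl rfl, ?_, ?_⟩
  · intro i hi
    interval_cases i <;> simpa
  · intro i hi
    interval_cases i <;> simpa

end Path

lemma exists_shortSet_union_maximal {a : Fin n} {J A : Finset (Fin n)}
    (hmax : ∀ i, L i ≤ L a) (haJ : a ∉ J) (haA : a ∉ A) (hJA : Disjoint J A) (hA : A.Nonempty)
    (haJs : ShortSet L (insert a J)) (hJAs : ¬ ShortSet L (J ∪ A)) :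
    ∃ S, S.Nonempty ∧ S ⊂ A ∧ ShortSet L (J ∪ S) ∧ ¬ ShortSet L (insert a (J ∪ S)) := by
  obtain ⟨j₀, hj₀⟩ := hA
  obtain ⟨S, hj₀S, ⟨hSA, hJS⟩, hSmax⟩ :=
    Finite.exists_le_maximal (p := fun S => S ⊆ A ∧ ShortSet L (J ∪ S)) (a := {j₀})
      ⟨singleton_subset_iff.2 hj₀, by
        simpa using haJs.exchange (hmax j₀) haJ (disjoint_right.1 hJA hj₀)⟩
  have hSA' : S ⊂ A := hSA.ssubset_of_ne (by rintro rfl; exact hJAs hJS)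
  refine ⟨S, ⟨j₀, singleton_subset_iff.1 hj₀S⟩, hSA', hJS, fun haJS => ?_⟩
  obtain ⟨j, hjA, hjS⟩ := exists_of_ssubset hSA'
  have hjJS : ShortSet L (J ∪ insert j S) := by
    rw [union_insert]
    refine haJS.exchange (hmax j) ?_ ?_ <;> simp only [mem_union, not_or]
    · exact ⟨haJ, fun haS => haA (hSA haS)⟩
    · exact ⟨disjoint_right.1 hJA hjA, hjS⟩
  exact hjS (hSmax ⟨insert_subset hjA hSA, hjJS⟩ (subset_insert j S) (mem_insert_self j S))

section Singleton

variable {I J K : Finset (Fin n)} {a : Fin n}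

lemma IsVertex.exists_adj_singleton (hpos : ∀ i, 0 < L i) (hV : IsVertex L (I, J, K))
    (ha : a ∈ I) (hA : (I.erase a).Nonempty)
    (h : ShortSet L (J ∪ I.erase a) ∨ ShortSet L (K ∪ I.erase a)) :
    ∃ X Y, IsVertex L ({a}, X, Y) ∧ GammaAdj L (I, J, K) ({a}, X, Y) := by
  have hIA : I \ I.erase a = {a} := sdiff_erase_self ha
  rcases h with h | h
  · exact ⟨J ∪ I.erase a, K, hIA ▸ hV.move_to_snd hpos (erase_ssubset ha) h,
      hIA ▸ gammaAdj_move_to_snd hA (erase_ssubset ha) h⟩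
  · exact ⟨J, K ∪ I.erase a, hIA ▸ hV.move_to_thd hpos (erase_ssubset ha) h,
      hIA ▸ gammaAdj_move_to_thd hV hA (erase_subset a I)⟩

lemma IsVertex.exists_gammaPath_two_singleton (hpos : ∀ i, 0 < L i) (hgen : GenericVec L)
    (hmax : ∀ i, L i ≤ L a) (hV : IsVertex L (I, J, K)) (ha : a ∈ I) (hA : (I.erase a).Nonempty)
    (hJA : ¬ ShortSet L (J ∪ I.erase a)) (hKA : ¬ ShortSet L (K ∪ I.erase a)) :
    ∃ X Y, IsVertex L ({a}, X, Y) ∧ GammaPath L 2 (I, J, K) ({a}, X, Y) := by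
  have hIJ : Disjoint I J := hV.2.2.2.2.2.2.1
  have hJa : ShortSet L (insert a J) := hV.compl_union_erase ha ▸ hgen.shortSet_compl hKA
  obtain ⟨S, hS, hSA, hJS, hJSa⟩ := exists_shortSet_union_maximal hmax
    (disjoint_left.1 hIJ ha) (notMem_erase a I) (hIJ.mono_left (erase_subset a I)).symm hA hJa hJA
  have hSI : S ⊂ I := hSA.trans_subset (erase_subset a I)
  have hM := hV.move_to_snd hpos hSI hJS
  have haM : a ∈ I \ S := mem_sdiff.2 ⟨ha, fun h => notMem_erase a I (hSA.subset h)⟩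
  have hMA : ((I \ S).erase a).Nonempty := by
    rw [← erase_sdiff_comm]
    exact sdiff_nonempty.2 (not_subset_of_ssubset hSA)
  have hKMA : ShortSet L (K ∪ (I \ S).erase a) :=
    compl_compl (K ∪ (I \ S).erase a) ▸ hgen.shortSet_compl (hM.compl_union_erase haM ▸ hJSa)
  obtain ⟨X, Y, hW, hMW⟩ := hM.exists_adj_singleton hpos haM hMA (Or.inr hKMA)
  exact ⟨X, Y, hW, .two hV hM hW (gammaAdj_move_to_snd hS hSI hJS) hMW⟩

lemma IsVertex.exists_gammaPath_singleton (hpos : ∀ i, 0 < L i) (hgen : GenericVec L)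
    (hmax : ∀ i, L i ≤ L a) (hV : IsVertex L (I, J, K)) (ha : a ∈ I) :
    ∃ X Y, IsVertex L ({a}, X, Y) ∧ ∃ m ≤ 2, GammaPath L m (I, J, K) ({a}, X, Y) := by
  rcases (I.erase a).eq_empty_or_nonempty with hA | hA
  · obtain rfl : I = {a} := by rw [← insert_erase ha, hA]; rfl
    exact ⟨J, K, hV, 0, by norm_num, .zero hV⟩
  by_cases h : ShortSet L (J ∪ I.erase a) ∨ ShortSet L (K ∪ I.erase a)
  · obtain ⟨X, Y, hW, hadj⟩ := hV.exists_adj_singleton hpos ha hA h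
    exact ⟨X, Y, hW, 1, by norm_num, .one hV hW hadj⟩
  · push Not at h
    obtain ⟨X, Y, hW, hp⟩ := hV.exists_gammaPath_two_singleton hpos hgen hmax ha hA h.1 h.2
    exact ⟨X, Y, hW, 2, le_rfl, hp⟩

end Singleton

end

/-- Edge `1` of the paper is index `0` in `Fin n`. -/
theorem singleton_longest_within_2 (n : ℕ) (hn : 3 ≤ n) (L : Fin n → ℝ)
    (hpos : ∀ i, 0 < L i) (hgen : GenericVec L)
    (hmax : ∀ i, L i ≤ L ⟨0, by omega⟩) :
    ∀ V : LTriple n, IsVertex L V →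
      ∃ I J : Finset (Fin n),
        IsVertex L ((I, ({⟨0, by omega⟩} : Finset (Fin n)), J) : LTriple n) ∧
        ∃ m ≤ 2, GammaPath L m V ((I, ({⟨0, by omega⟩} : Finset (Fin n)), J) : LTriple n) := by
  intro V hV
  obtain ⟨⟨I, J, K⟩, hVI, hI, ha⟩ := hV.exists_cyclEq_mem_fst ⟨0, by omega⟩
  obtain ⟨X, Y, hW, m, hm, hp⟩ := hI.exists_gammaPath_singleton hpos hgen hmax ha
  exact ⟨Y, X, hW.rotT.rotT, m, hm, (hp.cyclEq_left hVI).cyclEq_right (Or.inr (Or.inl rfl))⟩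
end
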